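/- arXiv:1511.07042 — 2 statements merged into one kernel-verified Lean document; each statement's English description precedes it below -/
import Mathlib

section
/- Let V be a real vector space, let a : V × V → ℝ be a symmetric positive-semidefinite bilinear form, and let b : V × V → ℝ be a bilinear form. Let λ_h, λ_H ∈ ℝ, C > 0, S ≥ 0 and u_h, u^h, p ∈ V satisfy: (i) a(u_h, v) = λ_h·b(u_h, v) for all v ∈ V; (ii) a(u^h, v) − λ_H·b(u^h, v) = b(p, v) for all v ∈ V; (iii) (inf-sup with shift λ_H) for every u ∈ V there exists v ∈ V with a(v, v) ≤ 1 and |a(u, v) − λ_H·b(u, v)| ≥ C·√(a(u, u)); (iv) |b(u_h − p, v)| ≤ S·√(a(v, v)) for all v ∈ V. Then the two-grid error e := u_h − (λ_h − λ_H)·u^h satisfies √(a(e, e)) ≤ C⁻¹·|λ_h − λ_H|·S. -/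
/-- Abstract two-grid stability estimate (core of the proof of the paper's
Theorem 3.1): applying the shift inf-sup condition to the two-grid error equation
yields the energy-seminorm bound `‖u_h - (lam_h - lam_H)•u^h‖_a ≤ C⁻¹·|lam_h - lam_H|·S`. -/
theorem two_grid_stability_estimate {V : Type*} [AddCommGroup V] [Module ℝ V]
    (a b : LinearMap.BilinForm ℝ V)
    (ha : ∀ x y : V, a x y = a y x)
    (hapos : ∀ x : V, 0 ≤ a x x)
    (lam_h lam_H C S : ℝ) (hC : 0 < C) (hS : 0 ≤ S)
    (u_h uh p : V)
    (heig : ∀ v : V, a u_h v = lam_h * b u_h v)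
    (hsource : ∀ v : V, a uh v - lam_H * b uh v = b p v)
    (hinfsup : ∀ u : V, ∃ v : V, a v v ≤ 1 ∧
      C * Real.sqrt (a u u) ≤ |a u v - lam_H * b u v|)
    (hdata : ∀ v : V, |b (u_h - p) v| ≤ S * Real.sqrt (a v v)) :
    Real.sqrt (a (u_h - (lam_h - lam_H) • uh) (u_h - (lam_h - lam_H) • uh)) ≤
      C⁻¹ * |lam_h - lam_H| * S := by
  set e := u_h - (lam_h - lam_H) • uh with he
  obtain ⟨v, hv1, hv2⟩ := hinfsup e
  have key : a e v - lam_H * b e v = (lam_h - lam_H) * b (u_h - p) v := by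
    simp only [he, map_sub, map_smul, LinearMap.sub_apply, LinearMap.smul_apply,
      smul_eq_mul, heig v]
    linear_combination (lam_H - lam_h) * hsource v
  have hsqv : Real.sqrt (a v v) ≤ 1 := by
    have := Real.sqrt_le_sqrt hv1
    simpa using this
  have h1 : C * Real.sqrt (a e e) ≤ |lam_h - lam_H| * S := by
    calc C * Real.sqrt (a e e) ≤ |a e v - lam_H * b e v| := hv2
      _ = |lam_h - lam_H| * |b (u_h - p) v| := by rw [key, abs_mul]
      _ ≤ |lam_h - lam_H| * (S * Real.sqrt (a v v)) := by
          exact mul_le_mul_of_nonneg_left (hdata v) (abs_nonneg _)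
      _ ≤ |lam_h - lam_H| * (S * 1) := by
          exact mul_le_mul_of_nonneg_left (mul_le_mul_of_nonneg_left hsqv hS) (abs_nonneg _)
      _ = |lam_h - lam_H| * S := by ring
  rw [mul_comm C⁻¹, mul_assoc] at *
  calc Real.sqrt (a e e) = C⁻¹ * (C * Real.sqrt (a e e)) := by field_simp
    _ ≤ C⁻¹ * (|lam_h - lam_H| * S) := by
        exact mul_le_mul_of_nonneg_left h1 (le_of_lt (inv_pos.mpr hC))
    _ = |lam_h - lam_H| * (C⁻¹ * S) := by ring
end

section
/- Let V be a real vector space and let a, b : V × V → ℝ be symmetric bilinear forms. Let λ ∈ ℝ and u ∈ V satisfy a(u, v) = λ·b(u, v) for all v ∈ V and b(u, u) = 1. Let I be a finite index set, let (u_i)_{i ∈ I} ⊆ V and (λ_i)_{i ∈ I} ⊆ ℝ satisfy a(u_i, v) = λ_i·b(u_i, v) for all v ∈ V and all i ∈ I, and let the u_i be b-orthonormal, i.e. b(u_i, u_j) = 1 if i = j and 0 if i ≠ j. For coefficients β : I → ℝ set w := Σ_{i ∈ I} β_i·u_i. Then a(w − u, w − u) − λ·b(w − u, w − u) = −Σ_{i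 ∈ I} β_i²·(λ − λ_i). -/
/-- Algebraic spine of estimate (2.22)/(3.16) in the paper's Lemma 2.2: for a
`b`-normalized eigenpair `(lam, u)` and a `b`-orthonormal family of eigenpairs
`(lam_i, u_i)`, the combination `w = Σ β_i • u_i` satisfies
`a(w-u, w-u) - lam·b(w-u, w-u) = -Σ β_i²·(lam - lam_i)`. -/
theorem energy_error_identity {V : Type*} [AddCommGroup V] [Module ℝ V]
    (a b : LinearMap.BilinForm ℝ V)
    (ha : ∀ x y : V, a x y = a y x) (hb : ∀ x y : V, b x y = b y x)
    (lam : ℝ) (u : V) (heig : ∀ v : V, a u v = lam * b u v)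
    (hnorm : b u u = 1)
    {I : Type*} [Fintype I] [DecidableEq I]
    (ui : I → V) (lami : I → ℝ)
    (heigi : ∀ i : I, ∀ v : V, a (ui i) v = lami i * b (ui i) v)
    (horth : ∀ i j : I, b (ui i) (ui j) = if i = j then 1 else 0)
    (β : I → ℝ) :
    a (∑ i, β i • ui i - u) (∑ i, β i • ui i - u)
      - lam * b (∑ i, β i • ui i - u) (∑ i, β i • ui i - u)
      = -∑ i, (β i) ^ 2 * (lam - lami i) := by
  set w : V := ∑ i, β i • ui i with hw
  have haw : ∀ v : V, a w v = ∑ i, β i * (lami i * b (ui i) v) := by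
    intro v
    simp [hw, map_sum, LinearMap.sum_apply, heigi, smul_eq_mul]
  have hbw : ∀ v : V, b w v = ∑ i, β i * b (ui i) v := by
    intro v
    simp [hw, map_sum, LinearMap.sum_apply, smul_eq_mul]
  have hbiw : ∀ i : I, b (ui i) w = β i := by
    intro i
    simp [hw, horth, mul_comm]
  have hbww : b w w = ∑ i, β i ^ 2 := by
    rw [hbw w]
    refine Finset.sum_congr rfl fun i _ => ?_
    rw [hbiw i]; ring
  have haww : a w w = ∑ i, β i ^ 2 * lami i := by
    rw [haw w]
    refine Finset.sum_congr rfl fun i _ => ?_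
    rw [hbiw i]; ring
  have hawu : a w u = lam * b u w := by
    rw [ha w u, heig w, hb u w]
  have hauw : a u w = lam * b u w := heig w
  have hauu : a u u = lam := by rw [heig u, hnorm, mul_one]
  simp only [map_sub, LinearMap.sub_apply]
  rw [haww, hawu, hauw, hauu, hbww, hb w u, hnorm]
  have key : ∑ i, β i ^ 2 * lami i - lam * ∑ i, β i ^ 2
      = -∑ i, β i ^ 2 * (lam - lami i) := by
    rw [Finset.mul_sum, ← Finset.sum_sub_distrib, ← Finset.sum_neg_distrib]
    exact Finset.sum_congr rfl fun i _ => by ring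
  rw [← key]; ring
end
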